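/- arXiv:2211.10471 — 9 statements merged into one kernel-verified Lean document; each statement's English description precedes it below -/
import Mathlib

section
/- Fix a natural number n ≥ 2 and a probability measure μ on the reals with μ((-∞,0)) = 0 and finite first moment. Let T ≥ 0 be a threshold with μ((T,∞)) = 2/n. Let x_1,…,x_n be i.i.d. random variables with law μ (i.e., consider the n-fold product measure on Fin n → ℝ). Define the value of the SIMPLE algorithm as V = Σ_{i<σ} x_i + (n−σ+1)·x_σ if σ := min{ i : x_i > T } exists (σ ≤ n), and V = Σ_{i=1}^n x_i if no x_i exceeds T. Define the value of the optimal offline algorithm as OPT = Σ_{i=1}^n max{x_1,…,x_i}. Then E[V] ≥ ((1+e^{-2})/(3−e^{-2}))·E[OPT]. -/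
open MeasureTheory

/-- Value collected by the SIMPLE algorithm with threshold `T` on the realization
`x : Fin n → ℝ`: if some value exceeds `T`, let `σ` be the first such index
(0-based); all earlier values are collected for one step each and `x σ` is collected
for all `n − σ` remaining steps (which is `n − σ + 1` steps in 1-based counting);
otherwise every value is collected for one step. -/
noncomputable def simpleValue (n : ℕ) (T : ℝ) (x : Fin n → ℝ) : ℝ :=
  if h : ∃ i, T < x i then
    let σ := (Finset.univ.filter fun i => T < x i).min'
      (by obtain ⟨i, hi⟩ := h; exact ⟨i, by simp [hi]⟩)
    (∑ i ∈ Finset.univ.filter fun i => i < σ, x i) + ((n : ℝ) - (σ : ℕ)) * x σ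
  else ∑ i, x i

/-- Value collected by the optimal offline algorithm (the prophet): in each step `i`
it collects the maximum of the values seen so far. -/
noncomputable def optValue (n : ℕ) (x : Fin n → ℝ) : ℝ :=
  ∑ i, (Finset.Iic i).sup' Finset.nonempty_Iic x

/-!
Keep only the stopped value: if `σ` is the first index with `x σ > T`, SIMPLE collects at least
`(n - σ) * x σ`. The event `{σ = s}` and `x s` depend on the coordinates up to `s` through a
product of one-variable factors, so independence gives
`E[SIMPLE] ≥ b * ∑_{s<n} (n - s) q^s` with `q = P(x ≤ T) = 1 - 2/n` and
`b = E[x; x > T] = A + 2T/n`, where `A = E[(x - T)⁺]`. Summing the arithmetico-geometric series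
gives `∑_{s<n} (n - s) q^s ≥ n(n + 2)/4`. On the prophet's side,
`max_{j ≤ i} x j ≤ T + ∑_{j ≤ i} (x j - T)⁺`, so `E[OPT] ≤ nT + n(n + 1)/2 * A`.
Comparing the two bounds gives `E[SIMPLE] ≥ E[OPT]/2`, and `(1 + e⁻²)/(3 - e⁻²) ≤ 1/2`.
-/

open Finset

theorem sq_one_sub_mul_sum_sub_mul_pow (q : ℝ) (n : ℕ) :
    (1 - q) ^ 2 * ∑ s ∈ range n, ((n : ℝ) - s) * q ^ s = n * (1 - q) - q + q ^ (n + 1) := by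
  induction n with
  | zero => simp
  | succ n ih =>
    have hsplit : ∑ s ∈ range (n + 1), ((n + 1 : ℝ) - s) * q ^ s
        = ∑ s ∈ range n, ((n : ℝ) - s) * q ^ s + ∑ s ∈ range (n + 1), q ^ s := by
      simp only [sum_range_succ _ n, sub_mul, add_mul, one_mul, sum_add_distrib, sum_sub_distrib]
      ring
    push_cast
    rw [hsplit]
    linear_combination ih - (1 - q) * geom_sum_mul q (n + 1)

theorem le_sum_sub_mul_pow_one_sub_two_div {n : ℕ} (hn : 2 ≤ n) :
    (n : ℝ) * (n + 2) / 4 ≤ ∑ s ∈ range n, ((n : ℝ) - s) * (1 - 2 / n) ^ s := by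
  have hn' : (2 : ℝ) ≤ n := by exact_mod_cast hn
  have hq : 0 ≤ 1 - 2 / (n : ℝ) := by rw [sub_nonneg, div_le_one (by linarith)]; exact hn'
  have hn0 : (n : ℝ) ≠ 0 := by positivity
  set q := 1 - 2 / (n : ℝ)
  set S := ∑ s ∈ range n, ((n : ℝ) - s) * q ^ s
  have key := sq_one_sub_mul_sum_sub_mul_pow q n
  have hpow := pow_nonneg hq (n + 1)
  have h1q : 1 - q = 2 / n := sub_sub_cancel 1 _
  have hS : S = (n : ℝ) ^ 2 / 4 * ((1 - q) ^ 2 * S) := by rw [h1q]; field_simp; ring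
  rw [hS, key, h1q]
  have hnq : (n : ℝ) * q = n - 2 := by simp only [q]; field_simp
  field_simp
  nlinarith [mul_nonneg (by linarith : (0 : ℝ) ≤ n) hpow]

theorem prophet_constant_le_half : (1 + Real.exp (-2)) / (3 - Real.exp (-2)) ≤ 1 / 2 := by
  have h : Real.exp (-2) ≤ 1 / 3 := by
    rw [Real.exp_neg, ← one_div]
    gcongr
    linarith [Real.add_one_le_exp (2 : ℝ)]
  rw [div_le_iff₀ (by linarith)]
  linarith

theorem prod_ite_lt_ite_eq {ι M : Type*} [LinearOrder ι] [Fintype ι] [LocallyFiniteOrderBot ι]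
    [CommMonoid M] (s : ι) (f g : ι → M) :
    ∏ i, (if i < s then f i else if i = s then g i else 1) = (∏ i ∈ Iio s, f i) * g s := by
  rw [prod_ite, prod_ite_eq']
  simp [filter_gt_eq_Iio]

section FirstExceed

variable {n : ℕ} {T : ℝ} {x : Fin n → ℝ}

def firstExceedSet (T : ℝ) (s : Fin n) : Set (Fin n → ℝ) := {x | T < x s ∧ ∀ i < s, x i ≤ T}

theorem measurableSet_firstExceedSet (T : ℝ) (s : Fin n) :
    MeasurableSet (firstExceedSet T s) := by
  unfold firstExceedSet
  measurability

theorem eq_of_mem_firstExceedSet {s t : Fin n} (hs : x ∈ firstExceedSet T s)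
    (ht : x ∈ firstExceedSet T t) : s = t := by
  by_contra hne
  rcases lt_or_gt_of_ne hne with h | h
  · exact (ht.2 s h).not_gt hs.1
  · exact (hs.2 t h).not_gt ht.1

theorem exists_mem_firstExceedSet (h : ∃ i, T < x i) : ∃ s, x ∈ firstExceedSet T s := by
  obtain ⟨s, hs, hmin⟩ := wellFounded_lt.has_min {i | T < x i} h
  exact ⟨s, hs, fun i hi => not_lt.1 fun hTi => hmin i hTi hi⟩

theorem simpleValue_of_mem_firstExceedSet {s : Fin n} (hx : x ∈ firstExceedSet T s) :
    simpleValue n T x = ∑ i ∈ univ.filter fun i => i < s, x i + ((n : ℝ) - (s : ℕ)) * x s := by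
  have hσ : (univ.filter fun i => T < x i).min' ⟨s, by simp [hx.1]⟩ = s :=
    le_antisymm (min'_le _ _ (by simp [hx.1]))
      (le_min' _ _ _ fun i hi => not_lt.1 fun his => (hx.2 i his).not_gt (by simpa using hi))
  rw [simpleValue, dif_pos ⟨s, hx.1⟩]
  simp only [hσ]

theorem simpleValue_eq_sum_indicator (x : Fin n → ℝ) :
    simpleValue n T x =
      ∑ s, (firstExceedSet T s).indicator
          (fun x => ∑ i ∈ univ.filter fun i => i < s, x i + ((n : ℝ) - (s : ℕ)) * x s) x
        + {x | ∀ i, x i ≤ T}.indicator (fun x => ∑ i, x i) x := by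
  by_cases h : ∃ i, T < x i
  · obtain ⟨s, hs⟩ := exists_mem_firstExceedSet h
    rw [sum_eq_single s (fun t _ hts => Set.indicator_of_notMem
        (fun ht => hts (eq_of_mem_firstExceedSet ht hs)) _) (by simp),
      Set.indicator_of_mem hs, Set.indicator_of_notMem (by simpa using h), add_zero,
      simpleValue_of_mem_firstExceedSet hs]
  · push Not at h
    rw [sum_eq_zero fun s _ => Set.indicator_of_notMem (fun hs => (h s).not_gt hs.1) _,
      Set.indicator_of_mem (show x ∈ {x | ∀ i, x i ≤ T} from h), zero_add, simpleValue,
      dif_neg (by simpa using h)]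

theorem sum_mul_indicator_firstExceedSet_le_simpleValue (hx : ∀ i, 0 ≤ x i) :
    ∑ s : Fin n, ((n : ℝ) - (s : ℕ)) * (firstExceedSet T s).indicator (fun x => x s) x
      ≤ simpleValue n T x := by
  rw [simpleValue_eq_sum_indicator]
  refine le_add_of_le_of_nonneg (sum_le_sum fun s _ => ?_)
    (Set.indicator_nonneg (fun x _ => sum_nonneg fun i _ => hx i) _)
  rw [← Set.indicator_const_mul]
  exact Set.indicator_le_indicator (le_add_of_nonneg_left (sum_nonneg fun i _ => hx i))

end FirstExceed

open Set in
noncomputable def stopFactor {n : ℕ} (T : ℝ) (s i : Fin n) (y : ℝ) : ℝ :=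
  if i < s then (Iic T).indicator 1 y else if i = s then (Ioi T).indicator id y else 1

theorem prod_stopFactor {n : ℕ} (T : ℝ) (s : Fin n) (x : Fin n → ℝ) :
    ∏ i, stopFactor T s i (x i) = (firstExceedSet T s).indicator (fun x => x s) x := by
  simp only [stopFactor]
  rw [prod_ite_lt_ite_eq]
  by_cases hx : x ∈ firstExceedSet T s
  · rw [Set.indicator_of_mem hx, Set.indicator_of_mem (Set.mem_Ioi.2 hx.1), prod_eq_one fun i hi =>
      Set.indicator_of_mem (Set.mem_Iic.2 (hx.2 i (mem_Iio.1 hi))) _, one_mul, id]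
  · rw [Set.indicator_of_notMem hx]
    simp only [firstExceedSet, Set.mem_ofPred_eq, not_and_or, not_forall, not_le] at hx
    rcases hx with hs | ⟨i, hi, hTi⟩
    · rw [Set.indicator_of_notMem (show x s ∉ Set.Ioi T from hs), mul_zero]
    · rw [prod_eq_zero (mem_Iio.2 hi)
        (Set.indicator_of_notMem (show x i ∉ Set.Iic T from not_le.2 hTi) _), zero_mul]

section Integral

variable {n : ℕ} {μ : Measure ℝ} [IsProbabilityMeasure μ] {T : ℝ}

theorem integral_stopFactor (s i : Fin n) :
    ∫ y, stopFactor T s i y ∂μ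
      = if i < s then μ.real (Set.Iic T) else if i = s then ∫ y in Set.Ioi T, y ∂μ else 1 := by
  unfold stopFactor
  split_ifs
  · exact integral_indicator_one measurableSet_Iic
  · exact integral_indicator measurableSet_Ioi
  · simp

theorem integral_indicator_firstExceedSet (s : Fin n) :
    ∫ x, (firstExceedSet T s).indicator (fun x => x s) x ∂(Measure.pi fun _ : Fin n => μ)
      = μ.real (Set.Iic T) ^ (s : ℕ) * ∫ y in Set.Ioi T, y ∂μ := by
  simp_rw [← prod_stopFactor, integral_fintype_prod_eq_prod, integral_stopFactor,
    prod_ite_lt_ite_eq, prod_const, Fin.card_Iio]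

theorem integrable_indicator_firstExceedSet (hint : Integrable id μ) (s : Fin n) :
    Integrable ((firstExceedSet T s).indicator fun x => x s) (Measure.pi fun _ : Fin n => μ) :=
  (integrable_eval hint).indicator (measurableSet_firstExceedSet T s)

theorem integrable_simpleValue (hint : Integrable id μ) :
    Integrable (simpleValue n T) (Measure.pi fun _ : Fin n => μ) := by
  have hsum : Integrable (fun x : Fin n → ℝ => ∑ i, x i) (Measure.pi fun _ : Fin n => μ) :=
    integrable_finsetSum _ fun i _ => integrable_eval hint
  rw [funext simpleValue_eq_sum_indicator]
  refine (integrable_finsetSum _ fun s _ => Integrable.indicator ?_ ?_).add (hsum.indicator ?_)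
  · exact (integrable_finsetSum _ fun i _ => integrable_eval hint).add
      ((integrable_eval hint).const_mul _)
  · exact measurableSet_firstExceedSet T s
  · measurability

theorem integral_simpleValue_ge (hneg : μ (Set.Iio 0) = 0) (hint : Integrable id μ) :
    (∫ y in Set.Ioi T, y ∂μ) * ∑ s ∈ range n, ((n : ℝ) - s) * μ.real (Set.Iic T) ^ s
      ≤ ∫ x, simpleValue n T x ∂(Measure.pi fun _ : Fin n => μ) := by
  have hnonneg : ∀ᵐ x ∂(Measure.pi fun _ : Fin n => μ), ∀ i, 0 ≤ x i :=
    ae_all_iff.2 fun i => Measure.pi_eval_preimage_null _ hneg |> measure_mono_null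
      fun x hx => by simpa using hx
  calc (∫ y in Set.Ioi T, y ∂μ) * ∑ s ∈ range n, ((n : ℝ) - s) * μ.real (Set.Iic T) ^ s
      = ∫ x, ∑ s : Fin n, ((n : ℝ) - (s : ℕ)) * (firstExceedSet T s).indicator (fun x => x s) x
          ∂(Measure.pi fun _ : Fin n => μ) := by
        rw [mul_sum, integral_finsetSum _ fun s _ =>
          (integrable_indicator_firstExceedSet hint s).const_mul _]
        simp_rw [integral_const_mul, integral_indicator_firstExceedSet]
        rw [Fin.sum_univ_eq_sum_range
          (fun s => ((n : ℝ) - s) * (μ.real (Set.Iic T) ^ s * ∫ y in Set.Ioi T, y ∂μ))]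
        exact sum_congr rfl fun s _ => by ring
    _ ≤ ∫ x, simpleValue n T x ∂(Measure.pi fun _ : Fin n => μ) :=
        integral_mono_ae (integrable_finsetSum _ fun s _ =>
          (integrable_indicator_firstExceedSet hint s).const_mul _) (integrable_simpleValue hint)
          (hnonneg.mono fun x hx => sum_mul_indicator_firstExceedSet_le_simpleValue hx)

end Integral

theorem sup'_le_add_sum_max_sub {ι : Type*} {s : Finset ι} (hs : s.Nonempty) (f : ι → ℝ)
    (T : ℝ) : s.sup' hs f ≤ T + ∑ j ∈ s, max (f j - T) 0 :=
  sup'_le hs f fun j hj => by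
    have := single_le_sum (f := fun j => max (f j - T) 0) (fun k _ => le_max_right _ _) hj
    linarith [le_max_left (f j - T) 0]

theorem optValue_le_sum_add_sum_max_sub {n : ℕ} (T : ℝ) (x : Fin n → ℝ) :
    optValue n x ≤ ∑ i : Fin n, (T + ∑ j ∈ Iic i, max (x j - T) 0) :=
  sum_le_sum fun _ _ => sup'_le_add_sum_max_sub nonempty_Iic x T

theorem sum_range_cast_add_one (n : ℕ) : ∑ i ∈ range n, ((i : ℝ) + 1) = n * (n + 1) / 2 := by
  induction n with
  | zero => simp
  | succ n ih => rw [sum_range_succ, ih]; push_cast; ring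

section Prophet

variable {n : ℕ} {μ : Measure ℝ} [IsProbabilityMeasure μ] {T : ℝ}

theorem integrable_optValue (hint : Integrable id μ) :
    Integrable (optValue n) (Measure.pi fun _ : Fin n => μ) := by
  refine integrable_finsetSum _ fun i _ => ?_
  have hsup := sup'_induction (p := (Integrable · (Measure.pi fun _ : Fin n => μ)))
    (nonempty_Iic (a := i)) (fun j (x : Fin n → ℝ) => x j) (fun _ hf _ hg => hf.sup hg)
    fun j _ => integrable_eval (i := j) hint
  exact hsup.congr (ae_of_all _ fun x => Finset.sup'_apply _ _ _)

theorem integral_optValue_le (hint : Integrable id μ) :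
    ∫ x, optValue n x ∂(Measure.pi fun _ : Fin n => μ)
      ≤ n * T + n * (n + 1) / 2 * ∫ y, max (y - T) 0 ∂μ := by
  have hmax : Integrable (fun y => max (y - T) 0) μ :=
    (hint.sub (integrable_const T)).sup (integrable_const 0)
  have hcoord (j : Fin n) :
      Integrable (fun x : Fin n → ℝ => max (x j - T) 0) (Measure.pi fun _ : Fin n => μ) :=
    integrable_comp_eval (μ := fun _ => μ) hmax
  have hbound (i : Fin n) : Integrable (fun x : Fin n → ℝ => T + ∑ j ∈ Iic i, max (x j - T) 0)
      (Measure.pi fun _ : Fin n => μ) :=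
    (integrable_const T).add (integrable_finsetSum _ fun j _ => hcoord j)
  calc ∫ x, optValue n x ∂(Measure.pi fun _ : Fin n => μ)
      ≤ ∫ x, ∑ i : Fin n, (T + ∑ j ∈ Iic i, max (x j - T) 0) ∂(Measure.pi fun _ : Fin n => μ) :=
        integral_mono (integrable_optValue hint) (integrable_finsetSum _ fun i _ => hbound i)
          (optValue_le_sum_add_sum_max_sub T)
    _ = ∑ i : Fin n, (T + ((i : ℕ) + 1) * ∫ y, max (y - T) 0 ∂μ) := by
        rw [integral_finsetSum _ fun i _ => hbound i]
        refine sum_congr rfl fun i _ => ?_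
        rw [integral_add (integrable_const T) (integrable_finsetSum _ fun j _ => hcoord j),
          integral_finsetSum _ fun j _ => hcoord j]
        simp_rw [integral_comp_eval (μ := fun _ => μ) hmax.aestronglyMeasurable]
        simp
    _ = n * T + n * (n + 1) / 2 * ∫ y, max (y - T) 0 ∂μ := by
        rw [sum_add_distrib, ← sum_mul, Fin.sum_univ_eq_sum_range (fun i => (i : ℝ) + 1),
          sum_range_cast_add_one]
        simp

theorem setIntegral_Ioi_eq_integral_max_sub_add (hint : Integrable id μ) :
    ∫ y in Set.Ioi T, y ∂μ = ∫ y, max (y - T) 0 ∂μ + T * μ.real (Set.Ioi T) := by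
  have hmax : (fun y => max (y - T) 0) = (Set.Ioi T).indicator fun y => y - T := by
    ext y
    by_cases hy : T < y
    · simp [hy, hy.le]
    · simp [hy, not_lt.1 hy]
  have hid : IntegrableOn (fun y => y) (Set.Ioi T) μ := hint.integrableOn
  rw [hmax, integral_indicator measurableSet_Ioi, integral_sub hid (integrable_const T),
    setIntegral_const, smul_eq_mul]
  ring

end Prophet

/-- The SIMPLE algorithm with threshold at the `(1 − 2/n)`-quantile achieves, in
expectation, at least a `(1 + e⁻²)/(3 − e⁻²)` fraction of the prophet's expected
value. -/
theorem simple_prophet_inequality (n : ℕ) (hn : 2 ≤ n)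
    (μ : Measure ℝ) [IsProbabilityMeasure μ]
    (hneg : μ (Set.Iio 0) = 0) (hint : Integrable id μ)
    (T : ℝ) (hT : 0 ≤ T) (hTq : μ (Set.Ioi T) = ENNReal.ofReal (2 / n)) :
    (∫ x, simpleValue n T x ∂(Measure.pi fun _ : Fin n => μ))
      ≥ ((1 + Real.exp (-2)) / (3 - Real.exp (-2))) *
        ∫ x, optValue n x ∂(Measure.pi fun _ : Fin n => μ) := by
  have hp : μ.real (Set.Ioi T) = 2 / n := by
    rw [measureReal_def, hTq, ENNReal.toReal_ofReal (by positivity)]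
  have hq : μ.real (Set.Iic T) = 1 - 2 / n := by
    rw [← Set.compl_Ioi, probReal_compl_eq_one_sub measurableSet_Ioi, hp]
  set A := ∫ y, max (y - T) 0 ∂μ
  have hA : 0 ≤ A := integral_nonneg fun y => le_max_right _ _
  have hSIMPLE := integral_simpleValue_ge (n := n) (T := T) hneg hint
  rw [setIntegral_Ioi_eq_integral_max_sub_add hint, hp, hq] at hSIMPLE
  have hc0 : 0 ≤ (1 + Real.exp (-2)) / (3 - Real.exp (-2)) :=
    div_nonneg (by positivity) (by linarith [Real.exp_le_one_iff.2 (by norm_num : (-2 : ℝ) ≤ 0)])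
  calc ((1 + Real.exp (-2)) / (3 - Real.exp (-2))) *
        ∫ x, optValue n x ∂(Measure.pi fun _ : Fin n => μ)
      ≤ ((1 + Real.exp (-2)) / (3 - Real.exp (-2))) * (n * T + n * (n + 1) / 2 * A) :=
        mul_le_mul_of_nonneg_left (integral_optValue_le hint) hc0
    _ ≤ 1 / 2 * (n * T + n * (n + 1) / 2 * A) :=
        mul_le_mul_of_nonneg_right prophet_constant_le_half (by positivity)
    _ ≤ (A + T * (2 / n)) * (n * (n + 2) / 4) := by
        field_simp
        nlinarith
    _ ≤ (A + T * (2 / n)) * ∑ s ∈ range n, ((n : ℝ) - s) * (1 - 2 / n) ^ s :=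
        mul_le_mul_of_nonneg_left (le_sum_sub_mul_pow_one_sub_two_div hn) (by positivity)
    _ ≤ ∫ x, simpleValue n T x ∂(Measure.pi fun _ : Fin n => μ) := hSIMPLE
end

section
/- Let μ be a probability measure on the reals with μ((-∞,0)) = 0 and finite first moment. Define G : ℕ → ℝ recursively by G(0) = 0 and, for n ≥ 1, G(n) = ∫ max_{t ∈ {1,…,n}} ( t·x + G(n−t) ) dμ(x). Then the sequence n ↦ G(n)/n is non-decreasing for n ≥ 1; equivalently, for every n ≥ 2, (n−1)·G(n) ≥ n·G(n−1). -/
open MeasureTheory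

theorem MeasureTheory.Integrable.finset_sup' {α ι : Type*} [MeasurableSpace α] {μ : Measure α}
    {s : Finset ι} (hs : s.Nonempty) {f : ι → α → ℝ} (hf : ∀ i ∈ s, Integrable (f i) μ) :
    Integrable (fun x => s.sup' hs (fun i => f i x)) μ := by
  simp_rw [← Finset.sup'_apply]
  exact Finset.sup'_induction (p := fun g => Integrable g μ) hs f (fun _ hg _ hh => hg.sup hh) hf

noncomputable def holdingValue (G : ℕ → ℝ) (n : ℕ) (hn : 1 ≤ n) (x : ℝ) : ℝ :=
  (Finset.Icc 1 n).sup' (Finset.nonempty_Icc.mpr hn) (fun t => (t : ℝ) * x + G (n - t))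

theorem integrable_holdingValue {μ : Measure ℝ} [IsFiniteMeasure μ] (hint : Integrable id μ)
    (G : ℕ → ℝ) (n : ℕ) (hn : 1 ≤ n) : Integrable (holdingValue G n hn) μ :=
  Integrable.finset_sup' _ fun t _ => (hint.const_mul (t : ℝ)).add (integrable_const _)

theorem le_holdingValue (G : ℕ → ℝ) {n t : ℕ} (ht₁ : 1 ≤ t) (htn : t ≤ n) (x : ℝ) :
    (t : ℝ) * x + G (n - t) ≤ holdingValue G n (ht₁.trans htn) x :=
  Finset.le_sup' (fun t : ℕ => (t : ℝ) * x + G (n - t)) (Finset.mem_Icc.mpr ⟨ht₁, htn⟩)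

/- If holding for `t` is optimal with `n = t + k` steps left, then with `n + 1` steps left,
`k` times the value of holding for `t` plus `t` times that of holding for `t + 1` equals
`(n + 1)` times the old optimum plus `k * G (k + 1) - (k + 1) * G k ≥ 0`. -/
theorem succ_mul_holdingValue_le (G : ℕ → ℝ) {n : ℕ} (hn : 1 ≤ n)
    (hstep : ∀ k < n, ((k : ℝ) + 1) * G k ≤ k * G (k + 1)) (x : ℝ) :
    ((n : ℝ) + 1) * holdingValue G n hn x ≤ n * holdingValue G (n + 1) (Nat.le_add_left 1 n) x := by
  obtain ⟨t, ht, hopt⟩ := Finset.exists_mem_eq_sup' (Finset.nonempty_Icc.mpr hn)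
    (fun t : ℕ => (t : ℝ) * x + G (n - t))
  obtain ⟨ht₁, htn⟩ := Finset.mem_Icc.mp ht
  obtain ⟨k, rfl⟩ := Nat.exists_eq_add_of_le htn
  have hstay : (t : ℝ) * x + G (k + 1) ≤ holdingValue G (t + k + 1) (by omega) x := by
    simpa [show t + k + 1 - t = k + 1 by omega] using
      le_holdingValue G ht₁ (by omega : t ≤ t + k + 1) x
  have hlonger : ((t : ℝ) + 1) * x + G k ≤ holdingValue G (t + k + 1) (by omega) x := by
    simpa [show t + k + 1 - (t + 1) = k by omega] using
      le_holdingValue G (by omega : 1 ≤ t + 1) (by omega : t + 1 ≤ t + k + 1) x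
  have hG := hstep k (by omega)
  rw [holdingValue, hopt, Nat.add_sub_cancel_left]
  push_cast
  linarith [mul_le_mul_of_nonneg_left hstay k.cast_nonneg,
    mul_le_mul_of_nonneg_left hlonger t.cast_nonneg]

theorem succ_mul_le_mul_succ (μ : Measure ℝ) [IsFiniteMeasure μ] (hint : Integrable id μ)
    (G : ℕ → ℝ) (hG0 : G 0 = 0)
    (hG : ∀ (n : ℕ) (hn : 1 ≤ n), G n = ∫ x, holdingValue G n hn x ∂μ) (n : ℕ) :
    ((n : ℝ) + 1) * G n ≤ n * G (n + 1) := by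
  induction n using Nat.strong_induction_on with
  | _ n ih =>
    rcases Nat.eq_zero_or_pos n with rfl | hn
    · simp [hG0]
    rw [hG n hn, hG (n + 1) (by omega), ← integral_const_mul, ← integral_const_mul]
    exact integral_mono ((integrable_holdingValue hint G n hn).const_mul _)
      ((integrable_holdingValue hint G _ _).const_mul _) (succ_mul_holdingValue_le G hn ih)

theorem optimal_average_monotone_general (μ : Measure ℝ) [IsProbabilityMeasure μ]
    (hint : Integrable id μ)
    (G : ℕ → ℝ) (hG0 : G 0 = 0)
    (hG : ∀ (n : ℕ) (hn : 1 ≤ n),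
      G n = ∫ x, (Finset.Icc 1 n).sup' (Finset.nonempty_Icc.mpr hn)
        (fun t => (t : ℝ) * x + G (n - t)) ∂μ) :
    ∀ n : ℕ, 2 ≤ n → ((n : ℝ) - 1) * G n ≥ (n : ℝ) * G (n - 1) := by
  intro n hn
  obtain ⟨k, rfl⟩ := Nat.exists_eq_add_of_le' (by omega : 1 ≤ n)
  have := succ_mul_le_mul_succ μ hint G hG0 hG k
  simp only [Nat.add_sub_cancel, Nat.cast_add, Nat.cast_one, add_sub_cancel_right]
  linarith

/-- The per-step average value `G n / n` of the optimal online procedure for the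
prophet-inequality over time is non-decreasing: `(n−1)·G n ≥ n·G (n−1)` for `n ≥ 2`. -/
theorem optimal_average_monotone (μ : Measure ℝ) [IsProbabilityMeasure μ]
    (hneg : μ (Set.Iio 0) = 0) (hint : Integrable id μ)
    (G : ℕ → ℝ) (hG0 : G 0 = 0)
    (hG : ∀ (n : ℕ) (hn : 1 ≤ n),
      G n = ∫ x, (Finset.Icc 1 n).sup' (Finset.nonempty_Icc.mpr hn)
        (fun t => (t : ℝ) * x + G (n - t)) ∂μ) :
    ∀ n : ℕ, 2 ≤ n → ((n : ℝ) - 1) * G n ≥ (n : ℝ) * G (n - 1) :=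
  optimal_average_monotone_general μ hint G hG0 hG
end

section
/- Let n ≥ 2 be a natural number and let G(0), G(1), …, G(n−1) be nonnegative reals with G(0) = 0 such that the quantities τ_k := G(k)/k (with τ_0 := 0) are non-decreasing in k for 0 ≤ k ≤ n−1. Let x ≥ 0 be a real number. (a) If x > G(n−1)/(n−1), then for every t ∈ {1,…,n}, t·x + G(n−t) ≤ n·x. (b) If x ≤ G(n−1)/(n−1), then for every t ∈ {1,…,n}, t·x + G(n−t) ≤ x + G(n−1). -/
/-! With `τ := G (n-1)/(n-1)`, monotonicity of the averages gives `G k ≤ k τ` for `k ≤ n - 1`,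
with equality at `k = n - 1`. Hence `t x + G (n-t) ≤ t x + (n-t) τ`, which is at most `n x`
when `τ < x`, and at most `x + (n-1) τ = x + G (n-1)` when `x ≤ τ` (the excess is
`(t-1)(x-τ) ≤ 0`). The convention `G 0 / 0 = 0` together with `G 0 = 0` makes `k = 0` harmless. -/

section Averages

variable {G : ℕ → ℝ}

theorem natCast_mul_div_self (hG0 : G 0 = 0) (k : ℕ) : (k : ℝ) * (G k / k) = G k :=
  mul_div_cancel_of_imp' fun hk => by rw [Nat.cast_eq_zero.mp hk, hG0]

theorem le_natCast_mul_div_of_div_le (hG0 : G 0 = 0) {j : ℕ} {c : ℝ} (h : G j / j ≤ c) :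
    G j ≤ j * c := by
  rcases Nat.eq_zero_or_pos j with rfl | hj
  · simp [hG0]
  · exact (div_le_iff₀' (Nat.cast_pos.mpr hj)).mp h

end Averages

theorem optimal_decision_structure_general (n : ℕ) (G : ℕ → ℝ)
    (hG0 : G 0 = 0)
    (hmono : ∀ j k : ℕ, j ≤ k → k ≤ n - 1 → G j / (j : ℝ) ≤ G k / (k : ℝ))
    (x : ℝ) :
    (G (n - 1) / ((n - 1 : ℕ) : ℝ) < x →
      ∀ t ∈ Finset.Icc 1 n, (t : ℝ) * x + G (n - t) ≤ (n : ℝ) * x) ∧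
    (x ≤ G (n - 1) / ((n - 1 : ℕ) : ℝ) →
      ∀ t ∈ Finset.Icc 1 n, (t : ℝ) * x + G (n - t) ≤ x + G (n - 1)) := by
  set τ := G (n - 1) / ((n - 1 : ℕ) : ℝ)
  have hrest : ∀ t, 1 ≤ t → t ≤ n → G (n - t) ≤ ((n : ℝ) - t) * τ := fun t h1t htn => by
    simpa [Nat.cast_sub htn] using
      le_natCast_mul_div_of_div_le hG0 (hmono (n - t) (n - 1) (by omega) le_rfl)
  refine ⟨fun hτx t ht => ?_, fun hxτ t ht => ?_⟩ <;> obtain ⟨h1t, htn⟩ := Finset.mem_Icc.mp ht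
  · have hgap : ((n : ℝ) - t) * τ ≤ ((n : ℝ) - t) * x :=
      mul_le_mul_of_nonneg_left hτx.le (sub_nonneg.mpr (Nat.cast_le.mpr htn))
    linarith [hrest t h1t htn]
  · have hlast : G (n - 1) = ((n : ℝ) - 1) * τ := by
      rw [← Nat.cast_pred (h1t.trans htn)]
      exact (natCast_mul_div_self hG0 (n - 1)).symm
    have hgap : ((t : ℝ) - 1) * x ≤ ((t : ℝ) - 1) * τ :=
      mul_le_mul_of_nonneg_left hxτ (sub_nonneg.mpr (Nat.one_le_cast.mpr h1t))
    linarith [hrest t h1t htn]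

/-- Structural core of the optimality of the online algorithm: if the per-step
averages `G k / k` (with `G 0 / 0 = 0` by convention) are non-decreasing up to
`n − 1`, then in the dynamic program `max_{t ∈ {1,…,n}} (t·x + G (n−t))` the maximum
is attained at `t = n` when `x > G (n−1)/(n−1)` and at `t = 1` otherwise. -/
theorem optimal_decision_structure (n : ℕ) (hn : 2 ≤ n) (G : ℕ → ℝ)
    (hGnonneg : ∀ k, k ≤ n - 1 → 0 ≤ G k) (hG0 : G 0 = 0)
    (hmono : ∀ j k : ℕ, j ≤ k → k ≤ n - 1 → G j / (j : ℝ) ≤ G k / (k : ℝ))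
    (x : ℝ) (hx : 0 ≤ x) :
    (G (n - 1) / ((n - 1 : ℕ) : ℝ) < x →
      ∀ t ∈ Finset.Icc 1 n, (t : ℝ) * x + G (n - t) ≤ (n : ℝ) * x) ∧
    (x ≤ G (n - 1) / ((n - 1 : ℕ) : ℝ) →
      ∀ t ∈ Finset.Icc 1 n, (t : ℝ) * x + G (n - t) ≤ x + G (n - 1)) :=
  optimal_decision_structure_general n G hG0 hmono x
end

section
/- Let μ be a finite measure on the reals such that the identity function is μ-integrable. Then the function g : ℝ → ℝ defined by g(τ) = ∫_{(-∞,τ]} x dμ(x) − τ·μ((-∞,τ]) is non-increasing (antitone). -/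
/-!
The defect equals `∫ min (x - τ) 0 dμ(x) = -∫ (τ - x)⁺ dμ(x)`, whose integrand is pointwise
antitone in `τ`.
-/

open MeasureTheory

theorem setIntegral_id_sub_mul_measureReal (μ : Measure ℝ) [IsFiniteMeasure μ]
    {s : Set ℝ} (hs : IntegrableOn (fun x => x) s μ) (τ : ℝ) :
    (∫ x in s, x ∂μ) - τ * μ.real s = ∫ x in s, (x - τ) ∂μ := by
  rw [integral_sub hs (integrable_const τ), integral_const,
    measureReal_restrict_apply_univ, smul_eq_mul, mul_comm]

theorem indicator_Iic_sub_eq_min_zero (τ x : ℝ) :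
    (Set.Iic τ).indicator (fun x => x - τ) x = min (x - τ) 0 := by
  by_cases hx : x ≤ τ
  · rw [Set.indicator_of_mem (Set.mem_Iic.2 hx), min_eq_left (sub_nonpos.2 hx)]
  · rw [Set.indicator_of_notMem (by simpa using hx), min_eq_right (by linarith)]

theorem setIntegral_Iic_sub_eq_integral_min_zero (μ : Measure ℝ) (τ : ℝ) :
    ∫ x in Set.Iic τ, (x - τ) ∂μ = ∫ x, min (x - τ) 0 ∂μ := by
  rw [← integral_indicator measurableSet_Iic]
  simp only [indicator_Iic_sub_eq_min_zero]

/-- The function `g(τ) = ∫_{(-∞,τ]} x dμ(x) − τ·μ((-∞,τ])` is non-increasing. -/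
theorem truncated_mean_defect_antitone (μ : Measure ℝ) [IsFiniteMeasure μ]
    (hint : Integrable id μ) :
    Antitone (fun τ : ℝ => (∫ x in Set.Iic τ, x ∂μ) - τ * (μ (Set.Iic τ)).toReal) := by
  have hmin : ∀ τ : ℝ, Integrable (fun x => min (x - τ) 0) μ := fun τ =>
    (hint.sub (integrable_const τ)).inf (integrable_const 0)
  intro a b hab
  simp only [← measureReal_def, setIntegral_id_sub_mul_measureReal μ hint.integrableOn,
    setIntegral_Iic_sub_eq_integral_min_zero]
  exact integral_mono (hmin b) (hmin a) fun x => min_le_min_right 0 (by linarith)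
end

section
/- For every natural number n ≥ 2, Σ_{i=1}^n (1 − 2/n)^{i−1} · (2/n) · (n − i + 1) ≥ n·(1 + e^{-2})/2 + 1 − 4·e^{-2}. -/
/-!
With `q = 1 - 2/n` the sum is an arithmetico-geometric series with closed form
`(n + 2)/2 + (n - 2) q^n / 2`, so the claim reduces to `(n - 8) e⁻² ≤ (n - 2) q^n`.
This follows from `exp (-t/(1-t)) ≤ 1 - t`, which gives
`q^n ≥ exp (-2 - 4/(n-2)) ≥ e⁻² (1 - 4/(n-2))`.
-/

open Finset Real

theorem sum_pow_mul_one_sub_mul_sub {R : Type*} [CommRing R] (q : R) (n : ℕ) :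
    ∑ k ∈ range n, q ^ k * (1 - q) * ((n : R) - k) = ∑ k ∈ range n, (1 - q ^ (k + 1)) := by
  induction n with
  | zero => simp
  | succ n ih =>
    have hsplit : ∀ k : ℕ, q ^ k * (1 - q) * (((n + 1 : ℕ) : R) - k)
        = q ^ k * (1 - q) * ((n : R) - k) + q ^ k * (1 - q) := fun k => by push_cast; ring
    rw [sum_congr rfl fun k _ => hsplit k, sum_add_distrib, sum_range_succ _ n, ih,
      ← sum_mul, geom_sum_mul_neg, sum_range_succ _ n]
    simp

theorem one_sub_mul_sum_pow_mul_one_sub_mul_sub {R : Type*} [CommRing R] (q : R) (n : ℕ) :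
    (1 - q) * ∑ k ∈ range n, q ^ k * (1 - q) * ((n : R) - k) = n * (1 - q) - q * (1 - q ^ n) := by
  rw [sum_pow_mul_one_sub_mul_sub, sum_sub_distrib]
  simp only [sum_const, card_range, nsmul_eq_mul, mul_one, pow_succ, ← sum_mul]
  linear_combination (-q) * geom_sum_mul_neg q n

theorem exp_neg_div_one_sub_le {t : ℝ} (ht : t < 1) : exp (-(t / (1 - t))) ≤ 1 - t := by
  have h1t : 0 < 1 - t := sub_pos.mpr ht
  have hexp : 1 / (1 - t) ≤ exp (t / (1 - t)) :=
    calc 1 / (1 - t) = t / (1 - t) + 1 := by field_simp; ring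
      _ ≤ exp (t / (1 - t)) := add_one_le_exp _
  rwa [exp_neg, inv_le_comm₀ (exp_pos _) h1t, ← one_div]

theorem exp_neg_mul_sub_le_sub_mul_one_sub_div_pow {a : ℝ} {n : ℕ} (ha₀ : 0 ≤ a) (ha : a < n) :
    exp (-a) * (n - a - a ^ 2) ≤ (n - a) * (1 - a / n) ^ n := by
  have hna : 0 < (n : ℝ) - a := sub_pos.mpr ha
  have hn : (0 : ℝ) < n := ha₀.trans_lt ha
  have hpow : exp (-a) * exp (-(a ^ 2 / (n - a))) ≤ (1 - a / n) ^ n := by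
    have hexp : exp (-a) * exp (-(a ^ 2 / (n - a))) = exp (-(a / n / (1 - a / n))) ^ n := by
      rw [← exp_add, ← exp_nat_mul]
      congr 1
      field_simp
      ring
    rw [hexp]
    exact pow_le_pow_left₀ (exp_nonneg _) (exp_neg_div_one_sub_le ((div_lt_one hn).mpr ha)) n
  calc exp (-a) * (n - a - a ^ 2) = (n - a) * (exp (-a) * (1 - a ^ 2 / (n - a))) := by
        field_simp
    _ ≤ (n - a) * (exp (-a) * exp (-(a ^ 2 / (n - a)))) := by
        gcongr
        exact one_sub_le_exp_neg _
    _ ≤ (n - a) * (1 - a / n) ^ n := by gcongr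

/-- Analytic core of the lower bound on the SIMPLE algorithm's expected value with
parameter `a = 2`. -/
theorem simple_lower_bound_sum (n : ℕ) (hn : 2 ≤ n) :
    ∑ i ∈ Finset.Icc 1 n,
        (1 - 2 / (n : ℝ)) ^ (i - 1) * (2 / (n : ℝ)) * ((n : ℝ) - (i : ℝ) + 1)
      ≥ (n : ℝ) * (1 + Real.exp (-2)) / 2 + 1 - 4 * Real.exp (-2) := by
  set q : ℝ := 1 - 2 / (n : ℝ) with hq
  have hreindex : ∑ i ∈ Icc 1 n, q ^ (i - 1) * (2 / (n : ℝ)) * ((n : ℝ) - (i : ℝ) + 1)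
      = ∑ k ∈ range n, q ^ k * (1 - q) * ((n : ℝ) - k) := by
    rw [← Ico_add_one_right_eq_Icc, sum_Ico_eq_sum_range]
    refine sum_congr (by simp) fun k _ => ?_
    simp only [Nat.add_sub_cancel_left]
    push_cast
    ring
  have hclosed : ∑ k ∈ range n, q ^ k * (1 - q) * ((n : ℝ) - k)
      = (n + 2) / 2 + (n - 2) * q ^ n / 2 := by
    have h := one_sub_mul_sum_pow_mul_one_sub_mul_sub q n
    rw [hq] at h ⊢
    field_simp at h ⊢
    linear_combination h
  have hpow : (n - 8) * exp (-2) ≤ (n - 2) * q ^ n := by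
    rcases hn.eq_or_lt with rfl | hn₂
    · norm_num [hq]
      positivity
    · have := exp_neg_mul_sub_le_sub_mul_one_sub_div_pow (a := 2) zero_le_two
        (by exact_mod_cast hn₂)
      linarith [exp_pos (-2)]
  rw [hreindex, hclosed]
  linarith
end

section
/- For every natural number n ≥ 2, Σ_{i=1}^n ( (1 − 2/n)^i + 2i/n ) ≤ n·(3 − e^{-2})/2 + 2·e^{-2}. -/
/-!
With `q = 1 - 2/n` both sums are explicit, and the left-hand side equals
`(n - 2)/2 * (1 - qⁿ) + n + 1`; the claim thus reduces to `(n - 4) e⁻² ≤ (n - 2) qⁿ`.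
For `n > 4` this follows from `log q ≥ (q - q⁻¹)/2` (that is, `sinh s ≤ s` for `s ≤ 0`), which
gives `qⁿ ≥ exp (-2 - 2/(n - 2)) ≥ e⁻² (1 - 2/(n - 2))`. The cruder bound `log q ≥ 1 - q⁻¹` loses a
term of order `1/n` and is not enough.
-/

open Finset Real

lemma half_sub_inv_le_log {q : ℝ} (hq₀ : 0 < q) (hq₁ : q ≤ 1) : (q - q⁻¹) / 2 ≤ log q := by
  rw [← sinh_log hq₀]
  exact sinh_le_self_iff.mpr (log_nonpos hq₀.le hq₁)

lemma exp_neg_sub_le_one_sub_div_pow {n : ℕ} {t : ℝ} (ht₀ : 0 ≤ t) (htn : t < n) :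
    exp (-t - t ^ 2 / (2 * (n - t))) ≤ (1 - t / n) ^ n := by
  have hn : (0 : ℝ) < n := ht₀.trans_lt htn
  set q := 1 - t / n with hq
  have hq₀ : 0 < q := by rw [sub_pos, div_lt_one hn]; exact htn
  have hq₁ : q ≤ 1 := by linarith [div_nonneg ht₀ hn.le]
  have hexp : -t - t ^ 2 / (2 * (n - t)) = n * ((q - q⁻¹) / 2) := by
    rw [hq]; field_simp [(sub_pos.mpr htn).ne']
    ring
  rw [hexp, exp_nat_mul]
  exact pow_le_pow_left₀ (exp_pos _).le
    ((le_log_iff_exp_le hq₀).mp (half_sub_inv_le_log hq₀ hq₁)) n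

lemma sub_four_mul_exp_neg_two_le (n : ℕ) (hn : 2 ≤ n) :
    ((n : ℝ) - 4) * exp (-2) ≤ ((n : ℝ) - 2) * (1 - 2 / (n : ℝ)) ^ n := by
  have hn' : (2 : ℝ) ≤ n := by exact_mod_cast hn
  have hq₀ : 0 ≤ 1 - 2 / (n : ℝ) := by
    rw [sub_nonneg, div_le_one (by linarith)]; exact hn'
  rcases le_or_gt (n : ℝ) 4 with h4 | h4
  · nlinarith [exp_pos (-2), pow_nonneg hq₀ n]
  have hn2 : (0 : ℝ) < n - 2 := by linarith
  calc ((n : ℝ) - 4) * exp (-2) = (n - 2) * (exp (-2) * (-(2 / (n - 2)) + 1)) := by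
        field_simp; ring
    _ ≤ (n - 2) * (exp (-2) * exp (-(2 / (n - 2)))) := by
        gcongr; exact add_one_le_exp _
    _ = (n - 2) * exp (-2 - 2 ^ 2 / (2 * (n - 2))) := by
        rw [← exp_add]; congr 2; field_simp; ring
    _ ≤ (n - 2) * (1 - 2 / (n : ℝ)) ^ n := by
        gcongr; exact exp_neg_sub_le_one_sub_div_pow zero_le_two (by linarith)

lemma sum_Icc_one_pow {q : ℝ} (hq : q ≠ 1) (n : ℕ) :
    ∑ i ∈ Icc 1 n, q ^ i = (q ^ (n + 1) - q) / (q - 1) := by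
  rw [← Ico_add_one_right_eq_Icc, geom_sum_Ico hq (by omega), pow_one]

lemma sum_Icc_one_natCast (n : ℕ) : ∑ i ∈ Icc 1 n, (i : ℝ) = n * (n + 1) / 2 := by
  induction n with
  | zero => simp
  | succ k ih => rw [sum_Icc_succ_top (by omega), ih]; push_cast; ring

/-- Analytic core of the upper bound on the prophet's expected value with
parameter `a = 2`. -/
theorem opt_upper_bound_sum (n : ℕ) (hn : 2 ≤ n) :
    ∑ i ∈ Finset.Icc 1 n, ((1 - 2 / (n : ℝ)) ^ i + 2 * (i : ℝ) / (n : ℝ))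
      ≤ (n : ℝ) * (3 - Real.exp (-2)) / 2 + 2 * Real.exp (-2) := by
  have hn₀ : (n : ℝ) ≠ 0 := by positivity
  have hq : 1 - 2 / (n : ℝ) ≠ 1 := by simp [hn₀]
  have hsum : ∑ i ∈ Icc 1 n, ((1 - 2 / (n : ℝ)) ^ i + 2 * (i : ℝ) / n)
      = (n - 2) / 2 * (1 - (1 - 2 / (n : ℝ)) ^ n) + (n + 1) := by
    rw [sum_add_distrib, sum_Icc_one_pow hq, ← sum_div, ← mul_sum, sum_Icc_one_natCast, pow_succ]
    field_simp
    ring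
  rw [hsum]
  linarith [sub_four_mul_exp_neg_two_le n hn]
end

section
/- (Advanced lower bound on the weighted mediant.) Let n ≥ 1 be a natural number, let a_1,…,a_n be nonnegative reals, let b_1,…,b_n be positive reals, and let w_1,…,w_n be positive reals that are non-increasing (w_1 ≥ w_2 ≥ … ≥ w_n). Then ( Σ_{i=1}^n w_i a_i ) / ( Σ_{i=1}^n w_i b_i ) ≥ min_{s ∈ {1,…,n}} ( Σ_{i=1}^{s} a_i ) / ( Σ_{i=1}^{s} b_i ). -/
/-! Put `m` for the minimum prefix mediant and `d i = a i - m * b i`. Every prefix sum of `d` is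
nonnegative, and by Abel summation a non-increasing nonnegative weighting of such a sequence has
nonnegative sum; hence `m * ∑ w i * b i ≤ ∑ w i * a i`. -/

open Finset

/-- Abel's inequality: the weights can be lowered one step at a time to the last one, because
every partial sum they multiply is nonnegative. -/
theorem mul_sum_Icc_le_sum_Icc_mul_of_antitoneOn {R : Type*} [Semiring R] [PartialOrder R]
    [IsOrderedRing R] (d w : ℕ → R) (n : ℕ)
    (hd : ∀ s ≤ n, 0 ≤ ∑ i ∈ Icc 1 s, d i) (hw : AntitoneOn w (Set.Icc 1 n)) :
    w n * ∑ i ∈ Icc 1 n, d i ≤ ∑ i ∈ Icc 1 n, w i * d i := by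
  induction n with
  | zero => simp
  | succ n ih =>
    rw [sum_Icc_succ_top (by omega), sum_Icc_succ_top (by omega), mul_add]
    gcongr
    rcases n.eq_zero_or_pos with rfl | hn
    · simp
    calc w (n + 1) * ∑ i ∈ Icc 1 n, d i
        ≤ w n * ∑ i ∈ Icc 1 n, d i :=
          mul_le_mul_of_nonneg_right
            (hw ⟨hn, by omega⟩ ⟨by omega, le_rfl⟩ (by omega)) (hd n (by omega))
      _ ≤ ∑ i ∈ Icc 1 n, w i * d i :=
          ih (fun s hs => hd s (by omega)) (hw.mono (Set.Icc_subset_Icc_right (by omega)))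

theorem weighted_mediant_lower_bound_general (n : ℕ) (hn : 1 ≤ n) (a b w : ℕ → ℝ)
    (hb : ∀ i ∈ Finset.Icc 1 n, 0 < b i)
    (hw : ∀ i ∈ Finset.Icc 1 n, 0 < w i)
    (hwmono : ∀ i j, 1 ≤ i → i ≤ j → j ≤ n → w j ≤ w i) :
    (∑ i ∈ Finset.Icc 1 n, w i * a i) / (∑ i ∈ Finset.Icc 1 n, w i * b i)
      ≥ (Finset.Icc 1 n).inf' (Finset.nonempty_Icc.mpr hn)
          (fun s => (∑ i ∈ Finset.Icc 1 s, a i) / (∑ i ∈ Finset.Icc 1 s, b i)) := by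
  set m := (Finset.Icc 1 n).inf' (Finset.nonempty_Icc.mpr hn)
    (fun s => (∑ i ∈ Finset.Icc 1 s, a i) / (∑ i ∈ Finset.Icc 1 s, b i))
  have hprefix : ∀ s ≤ n, 0 ≤ ∑ i ∈ Icc 1 s, (a i - m * b i) := by
    intro s hs
    rcases s.eq_zero_or_pos with rfl | hs₀
    · simp
    have hB : 0 < ∑ i ∈ Icc 1 s, b i :=
      sum_pos (fun i hi => hb i (Icc_subset_Icc_right hs hi)) (nonempty_Icc.mpr hs₀)
    have hm : m ≤ (∑ i ∈ Icc 1 s, a i) / ∑ i ∈ Icc 1 s, b i :=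
      inf'_le _ (mem_Icc.mpr ⟨hs₀, hs⟩)
    rwa [sum_sub_distrib, ← mul_sum, sub_nonneg, ← le_div_iff₀ hB]
  have hweighted : 0 ≤ ∑ i ∈ Icc 1 n, w i * (a i - m * b i) :=
    (mul_nonneg (hw n (right_mem_Icc.mpr hn)).le (hprefix n le_rfl)).trans
      (mul_sum_Icc_le_sum_Icc_mul_of_antitoneOn _ w n hprefix
        (fun i hi j hj hij => hwmono i j hi.1 hij hj.2))
  have hWb : 0 < ∑ i ∈ Icc 1 n, w i * b i :=
    sum_pos (fun i hi => mul_pos (hw i hi) (hb i hi)) (nonempty_Icc.mpr hn)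
  simp only [mul_sub, sum_sub_distrib, mul_left_comm _ m, ← mul_sum, sub_nonneg] at hweighted
  rwa [ge_iff_le, le_div_iff₀ hWb]

/-- Advanced lower bound on the weighted mediant: for nonnegative `a i`, positive
`b i` and non-increasing positive weights `w i`, the weighted mediant is at least
the minimum prefix mediant. -/
theorem weighted_mediant_lower_bound (n : ℕ) (hn : 1 ≤ n) (a b w : ℕ → ℝ)
    (ha : ∀ i ∈ Finset.Icc 1 n, 0 ≤ a i)
    (hb : ∀ i ∈ Finset.Icc 1 n, 0 < b i)
    (hw : ∀ i ∈ Finset.Icc 1 n, 0 < w i)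
    (hwmono : ∀ i j, 1 ≤ i → i ≤ j → j ≤ n → w j ≤ w i) :
    (∑ i ∈ Finset.Icc 1 n, w i * a i) / (∑ i ∈ Finset.Icc 1 n, w i * b i)
      ≥ (Finset.Icc 1 n).inf' (Finset.nonempty_Icc.mpr hn)
          (fun s => (∑ i ∈ Finset.Icc 1 s, a i) / (∑ i ∈ Finset.Icc 1 s, b i)) :=
  weighted_mediant_lower_bound_general n hn a b w hb hw hwmono
end

section
/- For every fixed real constant a ≥ 0, the sequence n ↦ n·( 1 + (1 − 1/n²)^{a·n} · (n² − 1) · ln(1 − 1/n²) ), over natural numbers n ≥ 2, converges to a as n → ∞. -/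
/-!
With `Q n = (n² - 1) log (1 - 1/n²)`, the elementary bounds `1 - 1/u ≤ log u ≤ u - 1` give
`0 ≤ 1 + Q n ≤ 1/n²`, so `n (1 + Q n) → 0` and `Q n → -1`. Writing the power as `exp (t n)` with
`n t n = a n² log (1 - 1/n²) → -a`, the equivalence `exp t - 1 ~ t` at `0` gives
`n (exp (t n) - 1) → -a`, and then `n (1 + exp (t n) Q n) = n (1 + Q n) + n (exp (t n) - 1) Q n → a`.
-/

open Filter Topology Asymptotics Real

theorem Real.isEquivalent_exp_sub_one : (fun x => exp x - 1) ~[𝓝 0] id := by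
  refine (hasDerivAt_exp 0).isLittleO.congr (fun x => ?_) fun x => ?_ <;> simp

theorem Filter.Tendsto.mul_exp_sub_one {α : Type*} {l : Filter α} {g t : α → ℝ} {c : ℝ}
    (hg : Tendsto g l atTop) (hgt : Tendsto (fun x => g x * t x) l (𝓝 c)) :
    Tendsto (fun x => g x * (Real.exp (t x) - 1)) l (𝓝 c) := by
  have ht : Tendsto t l (𝓝 0) := by
    have := hgt.mul (tendsto_inv_atTop_zero.comp hg)
    rw [mul_zero] at this
    refine this.congr' ?_
    filter_upwards [hg.eventually_ne_atTop 0] with x hx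
    simp only [Function.comp_apply]
    field_simp
  exact (IsEquivalent.refl.mul (isEquivalent_exp_sub_one.comp_tendsto ht)).symm.tendsto_nhds hgt

lemma neg_one_le_sub_one_mul_log_one_sub_one_div {y : ℝ} (hy : 1 < y) :
    -1 ≤ (y - 1) * log (1 - 1 / y) := by
  have hu : 0 < 1 - 1 / y := sub_pos.2 ((div_lt_one (by linarith)).2 hy)
  have : y - 1 ≠ 0 := by linarith
  calc -1 = (y - 1) * (1 - (1 - 1 / y)⁻¹) := by field_simp; ring
    _ ≤ _ := mul_le_mul_of_nonneg_left (one_sub_inv_le_log_of_pos hu) (by linarith)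

lemma one_add_sub_one_mul_log_one_sub_one_div_le {y : ℝ} (hy : 1 < y) :
    1 + (y - 1) * log (1 - 1 / y) ≤ 1 / y := by
  have hu : 0 < 1 - 1 / y := sub_pos.2 ((div_lt_one (by linarith)).2 hy)
  have := mul_le_mul_of_nonneg_left (log_le_sub_one_of_pos hu) (by linarith : 0 ≤ y - 1)
  calc 1 + (y - 1) * log (1 - 1 / y) ≤ 1 + (y - 1) * (1 - 1 / y - 1) := by linarith
    _ = 1 / y := by field_simp; ring

lemma one_lt_natCast_sq {n : ℕ} (hn : 1 < n) : 1 < (n : ℝ) ^ 2 :=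
  one_lt_pow₀ (by exact_mod_cast hn) two_ne_zero

lemma tendsto_natCast_mul_one_add_sub_one_mul_log :
    Tendsto (fun n : ℕ => (n : ℝ) * (1 + ((n : ℝ) ^ 2 - 1) * log (1 - 1 / (n : ℝ) ^ 2)))
      atTop (𝓝 0) := by
  refine tendsto_of_tendsto_of_tendsto_of_le_of_le' tendsto_const_nhds
    tendsto_one_div_atTop_nhds_zero_nat ?_ ?_ <;>
    filter_upwards [eventually_gt_atTop 1] with n hn
  · have := neg_one_le_sub_one_mul_log_one_sub_one_div (one_lt_natCast_sq hn)
    have : (0 : ℝ) ≤ n := n.cast_nonneg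
    nlinarith
  · calc (n : ℝ) * (1 + ((n : ℝ) ^ 2 - 1) * log (1 - 1 / (n : ℝ) ^ 2))
        ≤ n * (1 / (n : ℝ) ^ 2) := mul_le_mul_of_nonneg_left
          (one_add_sub_one_mul_log_one_sub_one_div_le (one_lt_natCast_sq hn)) n.cast_nonneg
      _ = 1 / n := by field_simp

lemma tendsto_sub_one_mul_log_one_sub_one_div_sq :
    Tendsto (fun n : ℕ => ((n : ℝ) ^ 2 - 1) * log (1 - 1 / (n : ℝ) ^ 2)) atTop (𝓝 (-1)) := by
  have := (tendsto_natCast_mul_one_add_sub_one_mul_log.mul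
    tendsto_one_div_atTop_nhds_zero_nat).sub_const 1
  rw [zero_mul, zero_sub] at this
  refine this.congr' ?_
  filter_upwards [eventually_ne_atTop 0] with n hn
  field_simp
  ring

lemma tendsto_log_one_sub_one_div_sq :
    Tendsto (fun n : ℕ => log (1 - 1 / (n : ℝ) ^ 2)) atTop (𝓝 0) := by
  have h : Tendsto (fun n : ℕ => 1 - 1 / (n : ℝ) ^ 2) atTop (𝓝 1) := by
    simpa using (tendsto_one_div_atTop_nhds_zero_nat.pow 2).const_sub (1 : ℝ)
  simpa [Function.comp_def] using (continuousAt_log one_ne_zero).tendsto.comp h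

theorem tendsto_n_one_add_rpow_mul_log_general (a : ℝ) :
    Tendsto
      (fun n : ℕ =>
        (n : ℝ) *
          (1 + (1 - 1 / (n : ℝ) ^ 2) ^ (a * (n : ℝ)) * ((n : ℝ) ^ 2 - 1) *
              Real.log (1 - 1 / (n : ℝ) ^ 2)))
      atTop (nhds a) := by
  have hQ := tendsto_sub_one_mul_log_one_sub_one_div_sq
  have hexp : Tendsto (fun n : ℕ => (n : ℝ) * (exp (log (1 - 1 / (n : ℝ) ^ 2) * (a * n)) - 1))
      atTop (𝓝 (-a)) := by
    refine tendsto_natCast_atTop_atTop.mul_exp_sub_one ?_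
    have := (hQ.add tendsto_log_one_sub_one_div_sq).const_mul a
    rw [add_zero, mul_neg_one] at this
    exact this.congr fun n => by ring
  have := tendsto_natCast_mul_one_add_sub_one_mul_log.add (hexp.mul hQ)
  rw [zero_add, neg_mul_neg, mul_one] at this
  refine this.congr' ?_
  filter_upwards [eventually_gt_atTop 1] with n hn
  rw [rpow_def_of_pos (sub_pos.2 ((div_lt_one (by positivity)).2 (one_lt_natCast_sq hn)))]
  ring

/-- Auxiliary limit: `n·(1 + (1 − 1/n²)^(a·n)·(n² − 1)·ln(1 − 1/n²)) → a` as `n → ∞`,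
where the power is the real-exponent power `rpow`. -/
theorem tendsto_n_one_add_rpow_mul_log (a : ℝ) (ha : 0 ≤ a) :
    Tendsto
      (fun n : ℕ =>
        (n : ℝ) *
          (1 + (1 - 1 / (n : ℝ) ^ 2) ^ (a * (n : ℝ)) * ((n : ℝ) ^ 2 - 1) *
              Real.log (1 - 1 / (n : ℝ) ^ 2)))
      atTop (nhds a) :=
  tendsto_n_one_add_rpow_mul_log_general a
end

section
/- Let φ = (1+√5)/2, and fix reals a ≥ 0 and b ∈ [0,1]. Then lim_{n→∞} (1/n) · (1 − 1/n²)^{a·n} · ((φ·n + n·√n)/(1 + n·√n)) · ( ⌊b·n⌋ + ( (1 − 1/n² − 1/√n)^{⌊b·n⌋} − 1 ) · (n² − n·√n − 1)/(1 + n·√n) ) = b, where n ranges over natural numbers. -/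
/-!
The factors converge separately. Since `x · (-1/x²) → 0`, `(1 - 1/x²)^x → e⁰`, hence
`(1 - 1/x²)^(a x) = ((1 - 1/x²)^x)^a → 1` for every real `a`; the `φ`-factor tends to `1`,
being `1 + O(1/√x)`; and `⌊b n⌋/n → b`. In the remaining term, divided by `n`, the factor
`q^⌊b n⌋ - 1` lies in `[-1, 0]` once `q = 1 - 1/n² - 1/√n ∈ [0, 1]`, while the rest is
`O(1/√n)`.
-/

open Filter Topology Real

lemma tendsto_one_sub_one_div_sq_rpow_mul (a : ℝ) :
    Tendsto (fun x : ℝ => (1 - 1 / x ^ 2) ^ (a * x)) atTop (𝓝 1) := by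
  have hinv : Tendsto (fun x : ℝ => -x⁻¹) atTop (𝓝 0) := by
    simpa using (tendsto_inv_atTop_zero (𝕜 := ℝ)).neg
  have hlin : Tendsto (fun x : ℝ => x * (-1 / x ^ 2)) atTop (𝓝 0) := by
    refine hinv.congr' ?_
    filter_upwards [eventually_ne_atTop 0] with x hx
    field_simp
  have hexp := (tendsto_one_add_rpow_exp_of_tendsto hlin).rpow_const (p := a)
    (.inl (exp_pos 0).ne')
  rw [exp_zero, one_rpow] at hexp
  refine hexp.congr' ?_
  filter_upwards [eventually_ge_atTop 1] with x hx
  have hbase : 0 ≤ 1 + -1 / x ^ 2 := by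
    rw [neg_div, ← sub_eq_add_neg, sub_nonneg, div_le_one (by positivity)]
    nlinarith
  rw [← rpow_mul hbase, mul_comm x a, neg_div, ← sub_eq_add_neg]

lemma tendsto_one_sub_one_div_sq_sub_one_div_sqrt :
    Tendsto (fun x : ℝ => 1 - 1 / x ^ 2 - 1 / √x) atTop (𝓝 1) := by
  have h1 : Tendsto (fun x : ℝ => 1 / x ^ 2) atTop (𝓝 0) :=
    tendsto_const_nhds.div_atTop (tendsto_pow_atTop two_ne_zero)
  have h2 : Tendsto (fun x : ℝ => 1 / √x) atTop (𝓝 0) :=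
    tendsto_const_nhds.div_atTop tendsto_sqrt_atTop
  simpa using (tendsto_const_nhds.sub h1).sub h2

lemma tendsto_mul_add_mul_sqrt_div_one_add_mul_sqrt (c : ℝ) :
    Tendsto (fun x : ℝ => (c * x + x * √x) / (1 + x * √x)) atTop (𝓝 1) := by
  have hnum : Tendsto (fun x : ℝ => c / √x + 1) atTop (𝓝 1) := by
    have := (tendsto_const_nhds (x := c)).div_atTop tendsto_sqrt_atTop |>.add_const 1
    rwa [zero_add] at this
  have hden : Tendsto (fun x : ℝ => 1 / (x * √x) + 1) atTop (𝓝 1) := by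
    have := (tendsto_const_nhds (x := (1 : ℝ))).div_atTop
      (tendsto_id.atTop_mul_atTop₀ tendsto_sqrt_atTop) |>.add_const 1
    rwa [zero_add] at this
  have := hnum.div hden one_ne_zero
  rw [div_one] at this
  refine this.congr' ?_
  filter_upwards [eventually_gt_atTop 0] with x hx
  have hs := sqrt_pos.mpr hx
  rw [Pi.div_apply]
  field_simp

lemma tendsto_sq_sub_mul_sqrt_sub_one_div_div_self :
    Tendsto (fun x : ℝ => (x ^ 2 - x * √x - 1) / (1 + x * √x) / x) atTop (𝓝 0) := by
  have hden : Tendsto (fun x : ℝ => √x + 1 / x) atTop atTop :=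
    tendsto_sqrt_atTop.atTop_add (tendsto_const_nhds.div_atTop tendsto_id)
  refine (tendsto_one_sub_one_div_sq_sub_one_div_sqrt.div_atTop hden).congr' ?_
  filter_upwards [eventually_gt_atTop 0] with x hx
  have hs := sqrt_pos.mpr hx
  have hss : √x * √x = x := mul_self_sqrt hx.le
  field_simp
  linear_combination (1 + x * √x) * x * hss

lemma tendsto_pow_sub_one_mul_of_tendsto_zero {ι : Type*} {l : Filter ι} {q D : ι → ℝ}
    (k : ι → ℕ) (hq : ∀ᶠ i in l, 0 ≤ q i ∧ q i ≤ 1) (hD : Tendsto D l (𝓝 0)) :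
    Tendsto (fun i => (q i ^ k i - 1) * D i) l (𝓝 0) := by
  refine isBoundedUnder_le_mul_tendsto_zero (isBoundedUnder_of_eventually_le (a := 1) ?_) hD
  filter_upwards [hq] with i ⟨h0, h1⟩
  have hpow0 := pow_nonneg h0 (k i)
  have hpow1 := pow_le_one₀ h0 h1 (n := k i)
  simp only [Function.comp, Real.norm_eq_abs, abs_le]
  constructor <;> linarith

theorem tendsto_scaled_closed_form_general (φ : ℝ)
    (a b : ℝ) (hb0 : 0 ≤ b) :
    Tendsto
      (fun n : ℕ =>
        (1 / (n : ℝ)) * (1 - 1 / (n : ℝ) ^ 2) ^ (a * (n : ℝ)) *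
          ((φ * (n : ℝ) + (n : ℝ) * Real.sqrt n) / (1 + (n : ℝ) * Real.sqrt n)) *
          ((⌊b * (n : ℝ)⌋₊ : ℝ) +
            ((1 - 1 / (n : ℝ) ^ 2 - 1 / Real.sqrt n) ^ (⌊b * (n : ℝ)⌋₊ : ℕ) - 1) *
              ((n : ℝ) ^ 2 - (n : ℝ) * Real.sqrt n - 1) / (1 + (n : ℝ) * Real.sqrt n)))
      atTop (nhds b) := by
  have hn : Tendsto (fun n : ℕ => (n : ℝ)) atTop atTop := tendsto_natCast_atTop_atTop
  have hq : ∀ᶠ n : ℕ in atTop,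
      0 ≤ 1 - 1 / (n : ℝ) ^ 2 - 1 / √n ∧ 1 - 1 / (n : ℝ) ^ 2 - 1 / √n ≤ 1 := by
    filter_upwards [(tendsto_one_sub_one_div_sq_sub_one_div_sqrt.comp hn).eventually
      (eventually_ge_nhds zero_lt_one)] with n hn0
    have h1 : 0 ≤ 1 / (n : ℝ) ^ 2 := by positivity
    have h2 : 0 ≤ 1 / √n := by positivity
    exact ⟨hn0, by linarith⟩
  have herr := tendsto_pow_sub_one_mul_of_tendsto_zero (fun n : ℕ => ⌊b * (n : ℝ)⌋₊) hq
    (tendsto_sq_sub_mul_sqrt_sub_one_div_div_self.comp hn)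
  have hlim := ((tendsto_one_sub_one_div_sq_rpow_mul a).comp hn).mul
    ((tendsto_mul_add_mul_sqrt_div_one_add_mul_sqrt φ).comp hn) |>.mul
    (((tendsto_nat_floor_mul_div_atTop hb0).comp hn).add herr)
  rw [one_mul, one_mul, add_zero] at hlim
  refine hlim.congr fun n => ?_
  simp only [Function.comp_apply]
  ring

/-- Tail-contribution limit in the `1/φ` upper bound construction: the scaled closed
form of the online value with `⌊b·n⌋` steps remaining tends to `b`. -/
theorem tendsto_scaled_closed_form (φ : ℝ) (hφ : φ = (1 + Real.sqrt 5) / 2)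
    (a b : ℝ) (ha : 0 ≤ a) (hb0 : 0 ≤ b) (hb1 : b ≤ 1) :
    Tendsto
      (fun n : ℕ =>
        (1 / (n : ℝ)) * (1 - 1 / (n : ℝ) ^ 2) ^ (a * (n : ℝ)) *
          ((φ * (n : ℝ) + (n : ℝ) * Real.sqrt n) / (1 + (n : ℝ) * Real.sqrt n)) *
          ((⌊b * (n : ℝ)⌋₊ : ℝ) +
            ((1 - 1 / (n : ℝ) ^ 2 - 1 / Real.sqrt n) ^ (⌊b * (n : ℝ)⌋₊ : ℕ) - 1) *
              ((n : ℝ) ^ 2 - (n : ℝ) * Real.sqrt n - 1) / (1 + (n : ℝ) * Real.sqrt n)))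
      atTop (nhds b) :=
  tendsto_scaled_closed_form_general φ a b hb0
end
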